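/- Let A ∈ ℝ^{m×n}, and let C ∈ ℝ^{m×r}, R ∈ ℝ^{r×n} satisfy ‖(I - CC⁺)A‖_F ≤ α‖A - A_r‖_F and ‖A(I - R⁺R)‖_F ≤ β‖A - A_r‖_F for constants α, β ≥ 0, where A_r is the best rank-r Frobenius approximation of A. Then with U = C⁺AR⁺, ‖A - CUR‖_F ≤ (α + β)‖A - A_r‖_F. -/
import Mathlib

open Matrix

/-- Frobenius norm. -/
noncomputable def frob {m n : Type*} [Fintype m] [Fintype n] (A : Matrix m n ℝ) : ℝ :=
  Real.sqrt (∑ i, ∑ j, (A i j) ^ 2)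

/-- Moore–Penrose pseudoinverse of a full-column-rank matrix. -/
noncomputable def pinvL {m k : Type*} [Fintype m] [Fintype k] [DecidableEq k]
    (C : Matrix m k ℝ) : Matrix k m ℝ := (Cᵀ * C)⁻¹ * Cᵀ

/-- Moore–Penrose pseudoinverse of a full-row-rank matrix. -/
noncomputable def pinvR {r n : Type*} [Fintype r] [Fintype n] [DecidableEq r]
    (R : Matrix r n ℝ) : Matrix n r ℝ := Rᵀ * (R * Rᵀ)⁻¹

attribute [local instance] Matrix.frobeniusNormedAddCommGroup

lemma frob_eq_norm {m n : Type*} [Fintype m] [Fintype n] (A : Matrix m n ℝ) :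
    frob A = ‖A‖ := by
  rw [frob, Matrix.frobenius_norm_def, Real.sqrt_eq_rpow]
  congr 1
  · refine Finset.sum_congr rfl fun i _ => Finset.sum_congr rfl fun j _ => ?_
    rw [Real.norm_eq_abs, Real.rpow_two, sq_abs]

lemma frob_sq {m n : Type*} [Fintype m] [Fintype n] (A : Matrix m n ℝ) :
    frob A ^ 2 = Matrix.trace (Aᵀ * A) := by
  have h : ∀ i j, (0:ℝ) ≤ (A i j)^2 := fun i j => sq_nonneg _
  rw [frob, Real.sq_sqrt (Finset.sum_nonneg fun i _ => Finset.sum_nonneg fun j _ => h i j)]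
  rw [Matrix.trace]
  simp only [Matrix.diag_apply, Matrix.mul_apply, Matrix.transpose_apply]
  rw [Finset.sum_comm]
  exact Finset.sum_congr rfl fun i _ => Finset.sum_congr rfl fun j _ => by ring_nf

lemma frob_nonneg {m n : Type*} [Fintype m] [Fintype n] (A : Matrix m n ℝ) :
    0 ≤ frob A := Real.sqrt_nonneg _

/-- Pythagoras: multiplying on the left by a symmetric idempotent contracts the
Frobenius norm. -/
lemma frob_proj_le {m n : Type*} [Fintype m] [Fintype n] [DecidableEq m]
    (P : Matrix m m ℝ) (hPs : Pᵀ = P) (hPi : P * P = P) (M : Matrix m n ℝ) :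
    frob (P * M) ≤ frob M := by
  have hPi' : P * (P * M) = P * M := by rw [← Matrix.mul_assoc, hPi]
  have key : frob M ^ 2 = frob (P * M) ^ 2 + frob ((1 - P) * M) ^ 2 := by
    rw [frob_sq, frob_sq, frob_sq, Matrix.transpose_mul, Matrix.transpose_mul,
      Matrix.transpose_sub, Matrix.transpose_one, hPs]
    have e1 : (Mᵀ * P) * (P * M) = Mᵀ * (P * M) := by
      rw [Matrix.mul_assoc, hPi']
    have e2 : (Mᵀ * (1 - P)) * ((1 - P) * M) = Mᵀ * M - Mᵀ * (P * M) := by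
      have h3 : (1 - P) * ((1 - P) * M) = M - P * M := by
        rw [Matrix.sub_mul, Matrix.one_mul, Matrix.sub_mul, Matrix.one_mul,
          Matrix.mul_sub, hPi']
        abel
      rw [Matrix.mul_assoc, h3, Matrix.mul_sub]
    rw [e1, e2, Matrix.trace_sub]
    ring
  have h2 : frob (P * M) ^ 2 ≤ frob M ^ 2 := by
    rw [key]; nlinarith [sq_nonneg (frob ((1 - P) * M : Matrix m n ℝ))]
  exact (pow_le_pow_iff_left₀ (frob_nonneg _) (frob_nonneg _) two_ne_zero).mp h2

lemma frob_add_le {m n : Type*} [Fintype m] [Fintype n] (A B : Matrix m n ℝ) :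
    frob (A + B) ≤ frob A + frob B := by
  simp only [frob_eq_norm]; exact norm_add_le _ _

lemma isUnit_tr_mul_self {m k : Type*} [Fintype m] [Fintype k] [DecidableEq k]
    (C : Matrix m k ℝ) (hC : LinearIndependent ℝ Cᵀ) : IsUnit (Cᵀ * C) := by
  have hinj : Function.Injective C.mulVec := Matrix.mulVec_injective_iff.mpr hC
  have h1 : LinearMap.ker C.mulVecLin = ⊥ := by
    rw [LinearMap.ker_eq_bot, Matrix.coe_mulVecLin]; exact hinj
  have h2 : LinearMap.ker (Cᵀ * C).mulVecLin = ⊥ :=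
    (Matrix.ker_mulVecLin_transpose_mul_self C).trans h1
  have h3 : Function.Injective (Cᵀ * C).mulVec := by
    rw [← Matrix.coe_mulVecLin]; exact LinearMap.ker_eq_bot.mp h2
  exact Matrix.mulVec_injective_iff_isUnit.mp h3

/-- combining column- and row-side residual bounds gives a CUR bound
    relative to the best rank-r approximation Ar. -/
theorem stmt9 {m n r : ℕ} (A Ar : Matrix (Fin m) (Fin n) ℝ)
    (C : Matrix (Fin m) (Fin r) ℝ) (R : Matrix (Fin r) (Fin n) ℝ)
    (hC : LinearIndependent ℝ Cᵀ) (hR : LinearIndependent ℝ (fun i => R i))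
    (hArrank : Ar.rank ≤ r)
    (hArbest : ∀ B : Matrix (Fin m) (Fin n) ℝ, B.rank ≤ r → frob (A - Ar) ≤ frob (A - B))
    (α β : ℝ) (hα : 0 ≤ α) (hβ : 0 ≤ β)
    (h1 : frob ((1 - C * pinvL C) * A) ≤ α * frob (A - Ar))
    (h2 : frob (A * (1 - pinvR R * R)) ≤ β * frob (A - Ar)) :
    frob (A - C * (pinvL C * A * pinvR R) * R) ≤ (α + β) * frob (A - Ar) := by
  have hu : IsUnit (Cᵀ * C) := isUnit_tr_mul_self C hC
  have hud : IsUnit (Cᵀ * C).det := (Matrix.isUnit_iff_isUnit_det _).mp hu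
  set P : Matrix (Fin m) (Fin m) ℝ := C * pinvL C with hP
  set Q : Matrix (Fin n) (Fin n) ℝ := pinvR R * R with hQ
  have hPs : Pᵀ = P := by
    rw [hP, pinvL]
    simp [Matrix.transpose_mul, Matrix.transpose_nonsing_inv, Matrix.mul_assoc]
  have hPi : P * P = P := by
    rw [hP, pinvL]
    calc C * ((Cᵀ * C)⁻¹ * Cᵀ) * (C * ((Cᵀ * C)⁻¹ * Cᵀ))
        = C * ((Cᵀ * C)⁻¹ * ((Cᵀ * C) * ((Cᵀ * C)⁻¹ * Cᵀ))) := by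
          simp only [Matrix.mul_assoc]
      _ = C * ((Cᵀ * C)⁻¹ * Cᵀ) := by
          rw [← Matrix.mul_assoc (Cᵀ * C), Matrix.mul_nonsing_inv _ hud, Matrix.one_mul]
  have hdec : A - C * (pinvL C * A * pinvR R) * R = (1 - P) * A + P * (A * (1 - Q)) := by
    have e : (1 - P) * A + P * (A * (1 - Q)) = A - P * (A * Q) := by
      rw [Matrix.sub_mul, Matrix.one_mul, Matrix.mul_sub, Matrix.mul_one, Matrix.mul_sub]
      abel
    rw [e, hP, hQ]
    simp [Matrix.mul_assoc]
  have tri : frob ((1 - P) * A + P * (A * (1 - Q))) ≤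
      frob ((1 - P) * A) + frob (P * (A * (1 - Q))) := frob_add_le _ _
  have hmid : frob (P * (A * (1 - Q))) ≤ frob (A * (1 - Q)) := frob_proj_le P hPs hPi _
  rw [hdec]
  calc frob ((1 - P) * A + P * (A * (1 - Q)))
      ≤ frob ((1 - P) * A) + frob (P * (A * (1 - Q))) := tri
    _ ≤ α * frob (A - Ar) + β * frob (A - Ar) := by
        refine add_le_add h1 (hmid.trans h2)
    _ = (α + β) * frob (A - Ar) := by ring
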